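/- arXiv:2605.26180 — 3 statements merged into one kernel-verified Lean document; each statement's English description precedes it below -/
import Mathlib

section
/- Let B and D be orthogonal projection matrices (Hermitian idempotent) on C^N. A nonzero vector x satisfies Bx = x and Dx = x simultaneously if and only if the operator norm ‖BD‖₂ = 1. -/
open Matrix
noncomputable section

section Aux

variable {E : Type*} [NormedAddCommGroup E] [InnerProductSpace ℂ E]

lemma proj_pyth {T : E →ₗ[ℂ] E} (hsym : T.IsSymmetric) (hid : ∀ x, T (T x) = T x)
    (x : E) : ‖x‖ ^ 2 = ‖T x‖ ^ 2 + ‖x - T x‖ ^ 2 := by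
  have horth : (inner ℂ (T x) (x - T x) : ℂ) = 0 := by
    rw [inner_sub_right]
    have h1 : (inner ℂ (T x) (T x) : ℂ) = inner ℂ x (T x) := by
      rw [hsym x (T x), hid]
    have h2 : (inner ℂ (T x) x : ℂ) = inner ℂ x (T x) := hsym x x
    rw [h1, h2, sub_self]
  have h := norm_add_sq_eq_norm_sq_add_norm_sq_of_inner_eq_zero (T x) (x - T x) horth
  have e : T x + (x - T x) = x := by abel
  rw [e] at h
  rw [pow_two, pow_two, pow_two]
  exact h

lemma proj_norm_le {T : E →ₗ[ℂ] E} (hsym : T.IsSymmetric) (hid : ∀ x, T (T x) = T x)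
    (x : E) : ‖T x‖ ≤ ‖x‖ := by
  have h := proj_pyth hsym hid x
  nlinarith [norm_nonneg (T x), norm_nonneg x, sq_nonneg ‖x - T x‖]

lemma proj_eq_of_norm {T : E →ₗ[ℂ] E} (hsym : T.IsSymmetric) (hid : ∀ x, T (T x) = T x)
    {x : E} (h : ‖T x‖ = ‖x‖) : T x = x := by
  have hp := proj_pyth hsym hid x
  rw [h] at hp
  have : ‖x - T x‖ ^ 2 = 0 := by linarith
  have : ‖x - T x‖ = 0 := by
    have := sq_eq_zero_iff.mp this
    exact this
  have := norm_eq_zero.mp this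
  have := sub_eq_zero.mp this
  exact this.symm

end Aux

/-- Spectral (ℓ²) operator norm of a complex matrix. -/
def opN {m n : Type*} [Fintype m] [Fintype n] [DecidableEq n] (A : Matrix m n ℂ) : ℝ :=
  ‖(Matrix.toEuclideanLin A).toContinuousLinearMap‖

/-- Perfect localization: a nonzero common fixed point of the orthogonal projections
`B` and `D` exists iff the spectral norm of `B * D` equals `1`. -/
theorem stmt0 {N : ℕ} (B D : Matrix (Fin N) (Fin N) ℂ)
    (hB1 : B.IsHermitian) (hB2 : B * B = B)
    (hD1 : D.IsHermitian) (hD2 : D * D = D) :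
    (∃ x : Fin N → ℂ, x ≠ 0 ∧ B.mulVec x = x ∧ D.mulVec x = x) ↔ opN (B * D) = 1 := by
  set E := EuclideanSpace ℂ (Fin N)
  set TB : E →ₗ[ℂ] E := Matrix.toEuclideanLin B with hTB
  set TD : E →ₗ[ℂ] E := Matrix.toEuclideanLin D with hTD
  have symB : TB.IsSymmetric := Matrix.isHermitian_iff_isSymmetric.mp hB1
  have symD : TD.IsSymmetric := Matrix.isHermitian_iff_isSymmetric.mp hD1
  have idB : ∀ x : E, TB (TB x) = TB x := by
    intro x
    show Matrix.toEuclideanLin B (Matrix.toEuclideanLin B x) = Matrix.toEuclideanLin B x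
    simp only [Matrix.toEuclideanLin_apply, Equiv.apply_symm_apply, Matrix.mulVec_mulVec, hB2]
  have idD : ∀ x : E, TD (TD x) = TD x := by
    intro x
    show Matrix.toEuclideanLin D (Matrix.toEuclideanLin D x) = Matrix.toEuclideanLin D x
    simp only [Matrix.toEuclideanLin_apply, Equiv.apply_symm_apply, Matrix.mulVec_mulVec, hD2]
  set f := (Matrix.toEuclideanLin (B * D)).toContinuousLinearMap with hf
  have hfapp : ∀ x : E, f x = TB (TD x) := by
    intro x
    show Matrix.toEuclideanLin (B * D) x = Matrix.toEuclideanLin B (Matrix.toEuclideanLin D x)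
    simp only [Matrix.toEuclideanLin_apply, Equiv.apply_symm_apply, Matrix.mulVec_mulVec]
  have hnorm_le : ∀ x : E, ‖f x‖ ≤ ‖x‖ := fun x => by
    rw [hfapp]
    exact le_trans (proj_norm_le symB idB (TD x)) (proj_norm_le symD idD x)
  have hf1 : ‖f‖ ≤ 1 := f.opNorm_le_bound zero_le_one (fun x => by simpa using hnorm_le x)
  constructor
  · rintro ⟨x, hx0, hBx, hDx⟩
    set y : E := (WithLp.equiv 2 (Fin N → ℂ)).symm x with hy
    have hyne : ‖y‖ ≠ 0 := by
      simp only [norm_ne_zero_iff, hy]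
      intro h
      exact hx0 (by have h' : (WithLp.equiv 2 (Fin N → ℂ)).symm x = 0 := norm_eq_zero.mp h; simpa using congrArg (WithLp.equiv 2 (Fin N → ℂ)) h')
    have hfy : f y = y := by
      show Matrix.toEuclideanLin (B * D) y = y
      rw [hy]; show Matrix.toEuclideanLin (B * D) (WithLp.toLp 2 x) = WithLp.toLp 2 x
      rw [Matrix.toEuclideanLin_apply_piLp_toLp, ← Matrix.mulVec_mulVec, hDx, hBx]
    have h1 : ‖y‖ ≤ ‖f‖ * ‖y‖ := by
      conv_lhs => rw [← hfy]
      exact f.le_opNorm y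
    have hypos : 0 < ‖y‖ := lt_of_le_of_ne (norm_nonneg y) (Ne.symm hyne)
    have : 1 ≤ ‖f‖ := by
      by_contra hlt
      push_neg at hlt
      nlinarith
    exact le_antisymm hf1 this
  · intro h
    have : ProperSpace E := by infer_instance
    obtain ⟨x₀, hx₀mem, hx₀max⟩ := (isCompact_closedBall (0 : E) 1).exists_isMaxOn
      ⟨0, Metric.mem_closedBall_self zero_le_one⟩
      ((f.continuous.norm).continuousOn)
    have hx₀le : ‖x₀‖ ≤ 1 := by simpa [Metric.mem_closedBall] using hx₀mem
    have hle : ‖f‖ ≤ ‖f x₀‖ := by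
      apply f.opNorm_le_bound (norm_nonneg _)
      intro x
      rcases eq_or_ne x 0 with rfl | hx
      · simp
      · have hxpos : 0 < ‖x‖ := norm_pos_iff.mpr hx
        set c : ℂ := ((‖x‖⁻¹ : ℝ) : ℂ) with hc
        have hcn : ‖c‖ = ‖x‖⁻¹ := by
          rw [hc, Complex.norm_real, Real.norm_eq_abs, abs_of_nonneg (inv_nonneg.mpr hxpos.le)]
        have hz : c • x ∈ Metric.closedBall (0 : E) 1 := by
          simp only [Metric.mem_closedBall, dist_zero_right, norm_smul, hcn]
          rw [inv_mul_cancel₀ hxpos.ne']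
        have hmax := hx₀max hz
        have hfz : ‖f (c • x)‖ = ‖x‖⁻¹ * ‖f x‖ := by
          rw [f.map_smul, norm_smul, hcn]
        simp only [Set.mem_setOf_eq, hfz] at hmax
        calc ‖f x‖ = ‖x‖ * (‖x‖⁻¹ * ‖f x‖) := by field_simp
        _ ≤ ‖x‖ * ‖f x₀‖ := mul_le_mul_of_nonneg_left hmax hxpos.le
        _ = ‖f x₀‖ * ‖x‖ := mul_comm _ _
    have h1le : (1 : ℝ) ≤ ‖f x₀‖ := h ▸ hle
    have hchain1 : ‖f x₀‖ ≤ ‖TD x₀‖ := by rw [hfapp]; exact proj_norm_le symB idB (TD x₀)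
    have hchain2 : ‖TD x₀‖ ≤ ‖x₀‖ := proj_norm_le symD idD x₀
    have hDfix : TD x₀ = x₀ := proj_eq_of_norm symD idD (by linarith)
    have hBfix : TB x₀ = x₀ := by
      have : TB (TD x₀) = TD x₀ := proj_eq_of_norm symB idB (by
        rw [← hfapp]; linarith)
      rwa [hDfix] at this
    refine ⟨WithLp.equiv 2 (Fin N → ℂ) x₀, ?_, ?_, ?_⟩
    · intro hzero
      have hx₀0 : x₀ = 0 := by
        have := congrArg (WithLp.equiv 2 (Fin N → ℂ)).symm hzero
        simpa using this
      rw [hx₀0] at h1le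
      simp only [map_zero, norm_zero] at h1le
      linarith
    · have := congrArg (WithLp.equiv 2 (Fin N → ℂ)) hBfix
      have h' : ((Matrix.toEuclideanLin B) x₀).ofLp = x₀.ofLp := by
        exact this
      exact h'
    · have := congrArg (WithLp.equiv 2 (Fin N → ℂ)) hDfix
      have h' : ((Matrix.toEuclideanLin D) x₀).ofLp = x₀.ofLp := by
        exact this
      exact h'
end
end

section
/- Let B and D be orthogonal projections on C^N and set D̄ = I − D. If ‖B D̄‖₂ < 1, then the matrix I − D̄ B is invertible, and the operator R = B (I − D̄ B)^{-1} satisfies R D x = x for every x with B x = x. -/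
open Matrix
noncomputable section

/-- Perfect recovery: if `‖B(I - D)‖₂ < 1` then `I - (I - D)B` is invertible and
`R = B (I - (I - D) B)⁻¹` recovers every `x ∈ range B` from its samples `D x`. -/
theorem stmt2 {N : ℕ} (B D : Matrix (Fin N) (Fin N) ℂ)
    (hB1 : B.IsHermitian) (hB2 : B * B = B)
    (hD1 : D.IsHermitian) (hD2 : D * D = D)
    (h : opN (B * (1 - D)) < 1) :
    IsUnit (1 - (1 - D) * B) ∧
      ∀ x : Fin N → ℂ, B.mulVec x = x →
        (B * (1 - (1 - D) * B)⁻¹).mulVec (D.mulVec x) = x := by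
  set e := (toEuclideanCLM (n := Fin N) (𝕜 := ℂ))
  have hnorm : ‖e (B * (1 - D))‖ < 1 := h
  have hu1 : IsUnit (1 - e (B * (1 - D))) := ⟨Units.oneSub _ hnorm, rfl⟩
  have hu2 : IsUnit (1 - B * (1 - D)) := by
    have : IsUnit (e (1 - B * (1 - D))) := by
      rw [map_sub, _root_.map_one]; exact hu1
    have h3 := this.map e.symm
    rwa [StarAlgEquiv.symm_apply_apply] at h3
  have hstar : star (1 - B * (1 - D)) = 1 - (1 - D) * B := by
    simp [Matrix.star_eq_conjTranspose, conjTranspose_sub, conjTranspose_mul, hB1.eq, hD1.eq]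
  have hu : IsUnit (1 - (1 - D) * B) := hstar ▸ hu2.star
  refine ⟨hu, fun x hx => ?_⟩
  set M := 1 - (1 - D) * B with hM
  have hdet : IsUnit M.det := (Matrix.isUnit_iff_isUnit_det M).mp hu
  have haux : (1 - D).mulVec x = x - D.mulVec x := by
    rw [Matrix.sub_mulVec, Matrix.one_mulVec]
  have hDx : D.mulVec x = M.mulVec x := by
    rw [hM, Matrix.sub_mulVec, Matrix.one_mulVec, ← Matrix.mulVec_mulVec, hx, haux]
    abel
  rw [hDx, Matrix.mulVec_mulVec, mul_assoc, Matrix.nonsing_inv_mul M hdet, mul_one, hx]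
end
end

section
/- Let B and D be orthogonal projections on C^N with D̄ = I − D. If ‖B D̄‖₂ = 1, then there exists a nonzero vector w with B w = w and D w = 0; consequently no linear operator R can satisfy R D x = x for all x in range(B). -/
/-!
Write `P` and `Q` for the orthogonal projections given by `B` and `1 - D`. On a finite-dimensional
space the operator norm of `P Q` is attained at some `x` with `‖x‖ ≤ 1`, so
`‖x‖ ≤ 1 = ‖P (Q x)‖ ≤ ‖Q x‖ ≤ ‖x‖`. An orthogonal projection preserves the norm of a vector only
if it fixes it, so `Q x = x` and `P x = x`: `x` is bandlimited and vanishes on the sampling set,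
hence its samples `D x = 0` cannot determine it.
-/

open Matrix
noncomputable section

open Metric

theorem ContinuousLinearMap.exists_mem_closedBall_norm_apply_eq {𝕜 E F : Type*}
    [DenselyNormedField 𝕜] [NormedAddCommGroup E] [NormedSpace 𝕜 E] [ProperSpace E]
    [SeminormedAddCommGroup F] [NormedSpace 𝕜 F] (f : E →L[𝕜] F) :
    ∃ x ∈ closedBall (0 : E) 1, ‖f x‖ = ‖f‖ := by
  obtain ⟨x, hx, hmax⟩ := (isCompact_closedBall (0 : E) 1).exists_sSup_image_eq
    ⟨0, mem_closedBall_self zero_le_one⟩ (continuous_norm.comp f.continuous).continuousOn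
  exact ⟨x, hx, hmax.symm.trans f.sSup_unitClosedBall_eq_norm⟩

section

variable {𝕜 E : Type*} [RCLike 𝕜] [NormedAddCommGroup E] [InnerProductSpace 𝕜 E]

theorem Submodule.mem_inf_of_norm_le_norm_starProjection_starProjection (K L : Submodule 𝕜 E)
    [K.HasOrthogonalProjection] [L.HasOrthogonalProjection] {x : E}
    (h : ‖x‖ ≤ ‖K.starProjection (L.starProjection x)‖) : x ∈ K ⊓ L := by
  have hxL : x ∈ L := by
    refine (L.mem_iff_norm_starProjection x).mpr (le_antisymm (L.norm_starProjection_apply_le x) ?_)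
    exact h.trans (K.norm_starProjection_apply_le _)
  rw [L.starProjection_eq_self_iff.mpr hxL] at h
  exact ⟨(K.mem_iff_norm_starProjection x).mpr
    (le_antisymm (K.norm_starProjection_apply_le x) h), hxL⟩

theorem IsStarProjection.exists_ne_zero_apply_eq_self_of_norm_mul_eq_one [ProperSpace E]
    {p q : E →L[𝕜] E} (hp : IsStarProjection p) (hq : IsStarProjection q) (h : ‖p * q‖ = 1) :
    ∃ x : E, x ≠ 0 ∧ p x = x ∧ q x = x := by
  obtain ⟨K, _, rfl⟩ := isStarProjection_iff_eq_starProjection.mp hp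
  obtain ⟨L, _, rfl⟩ := isStarProjection_iff_eq_starProjection.mp hq
  obtain ⟨x, hx, hnorm⟩ := (K.starProjection * L.starProjection).exists_mem_closedBall_norm_apply_eq
  rw [h] at hnorm
  have hxKL := K.mem_inf_of_norm_le_norm_starProjection_starProjection L
    ((mem_closedBall_zero_iff.mp hx).trans hnorm.ge)
  refine ⟨x, ?_, K.starProjection_eq_self_iff.mpr hxKL.1, L.starProjection_eq_self_iff.mpr hxKL.2⟩
  rintro rfl
  simp at hnorm

end

/-- Converse of the sampling theorem: if `‖B(I - D)‖₂ = 1` there is a nonzero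
bandlimited vector vanishing on the sampling set, so no linear reconstruction
operator recovers every bandlimited signal from its samples. -/
theorem stmt3 {N : ℕ} (B D : Matrix (Fin N) (Fin N) ℂ)
    (hB1 : B.IsHermitian) (hB2 : B * B = B)
    (hD1 : D.IsHermitian) (hD2 : D * D = D)
    (h : opN (B * (1 - D)) = 1) :
    (∃ w : Fin N → ℂ, w ≠ 0 ∧ B.mulVec w = w ∧ D.mulVec w = 0) ∧
      ¬ ∃ R : Matrix (Fin N) (Fin N) ℂ,
          ∀ x : Fin N → ℂ, B.mulVec x = x → R.mulVec (D.mulVec x) = x := by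
  have hB : IsStarProjection B := ⟨hB2, hB1⟩
  have hD : IsStarProjection (1 - D) := IsStarProjection.one_sub ⟨hD2, hD1⟩
  obtain ⟨x, hx0, hBx, hDx⟩ :=
    (hB.map (toEuclideanCLM (𝕜 := ℂ))).exists_ne_zero_apply_eq_self_of_norm_mul_eq_one
      (hD.map (toEuclideanCLM (𝕜 := ℂ))) (by rw [← map_mul]; exact h)
  have hBw : B *ᵥ x.ofLp = x.ofLp := congrArg WithLp.ofLp hBx
  have hDw : D *ᵥ x.ofLp = 0 := by
    simpa [sub_mulVec] using congrArg WithLp.ofLp hDx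
  refine ⟨⟨x.ofLp, by simpa using hx0, hBw, hDw⟩, ?_⟩
  rintro ⟨R, hR⟩
  exact hx0 (by simpa [hDw] using (hR _ hBw).symm)
end
end
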